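/- Regularization property of IRMGL under the discrepancy principle: Assume C > 0 and C₀ := η − ν₀(℘ + ν₁) − η₀η₁ > 0. Let (δ_j) be positive reals with δ_j → 0, let v_j ∈ V satisfy ‖v_j − v‖ ≤ δ_j, and let initial points u₀^{(j)} ∈ U satisfy u₀^{(j)} → u₀ with ‖u₀ − u†‖ ≤ ℘ and ‖u₀^{(j)} − u†‖ ≤ ℘ for all j. Let (u_k^{(j)})_k be the IRMGL iterates with data v_j started at u₀^{(j)}, and let k_j := min{k ≥ 0 : ‖Au_k^{(j)} − v_j‖ ≤ τδ_j} be the discrepancy stopping index. Then there exists a solution û ∈ U of Aû = v such that u_{k_j}^{(j)} → û as j → ∞. -/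

import Mathlib

open scoped BigOperators RealInnerProductSpace Classical
open ContinuousLinearMap Filter

noncomputable section

/-- Weight matrix induced by a signal `x` on the image graph. -/
def wMat {n : ℕ} (g : Fin n → Fin n → ℝ) (σ : ℝ) (x : EuclideanSpace ℝ (Fin n)) :
    Matrix (Fin n) (Fin n) ℝ :=
  Matrix.of fun a b => g a b * Real.exp (-(x a - x b) ^ 2 / σ)

/-- Degree function of the graph induced by `x`. -/
def degFun {n : ℕ} (g : Fin n → Fin n → ℝ) (σ : ℝ) (x : EuclideanSpace ℝ (Fin n))
    (a : Fin n) : ℝ :=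
  ∑ b, wMat g σ x a b

/-- Graph Laplacian matrix `Δ_x = D_x − W_x`. -/
def lapMat {n : ℕ} (g : Fin n → Fin n → ℝ) (σ : ℝ) (x : EuclideanSpace ℝ (Fin n)) :
    Matrix (Fin n) (Fin n) ℝ :=
  Matrix.diagonal (degFun g σ x) - wMat g σ x

/-- Graph Laplacian as a continuous linear map on Euclidean space. -/
def lapCLM {n : ℕ} (g : Fin n → Fin n → ℝ) (σ : ℝ) (x : EuclideanSpace ℝ (Fin n)) :
    EuclideanSpace ℝ (Fin n) →L[ℝ] EuclideanSpace ℝ (Fin n) :=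
  LinearMap.toContinuousLinearMap (Matrix.toEuclideanLin (lapMat g σ x))

/-- Adaptive step size `α_w(u)`. -/
def alphaStep {n m : ℕ} (A : EuclideanSpace ℝ (Fin n) →L[ℝ] EuclideanSpace ℝ (Fin m))
    (η₀ η₁ : ℝ) (w : EuclideanSpace ℝ (Fin m)) (u : EuclideanSpace ℝ (Fin n)) : ℝ :=
  if adjoint A (A u - w) ≠ 0 then
    min (η₀ * ‖A u - w‖ ^ 2 / ‖adjoint A (A u - w)‖ ^ 2) η₁
  else η₁

/-- Adaptive weight `β_w(u)`. -/
def betaStep {n m : ℕ} (g : Fin n → Fin n → ℝ) (σ : ℝ)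
    (A : EuclideanSpace ℝ (Fin n) →L[ℝ] EuclideanSpace ℝ (Fin m))
    (ν₀ ν₁ ν₂ : ℝ) (w : EuclideanSpace ℝ (Fin m)) (u : EuclideanSpace ℝ (Fin n)) : ℝ :=
  if lapCLM g σ u u ≠ 0 then
    min (min (ν₀ * ‖A u - w‖ ^ 2 / ‖lapCLM g σ u u‖) (ν₁ / ‖lapCLM g σ u u‖)) ν₂
  else 0

/-- One step of the IRMGL iteration with data `w`. -/
def irmglStep {n m : ℕ} (g : Fin n → Fin n → ℝ) (σ : ℝ)
    (A : EuclideanSpace ℝ (Fin n) →L[ℝ] EuclideanSpace ℝ (Fin m))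
    (η₀ η₁ ν₀ ν₁ ν₂ : ℝ) (w : EuclideanSpace ℝ (Fin m))
    (u : EuclideanSpace ℝ (Fin n)) : EuclideanSpace ℝ (Fin n) :=
  u - alphaStep A η₀ η₁ w u • adjoint A (A u - w)
    - betaStep g σ A ν₀ ν₁ ν₂ w u • lapCLM g σ u u

/-- The IRMGL iterates with data `w` started at `u₀`. -/
def irmglSeq {n m : ℕ} (g : Fin n → Fin n → ℝ) (σ : ℝ)
    (A : EuclideanSpace ℝ (Fin n) →L[ℝ] EuclideanSpace ℝ (Fin m))
    (η₀ η₁ ν₀ ν₁ ν₂ : ℝ) (w : EuclideanSpace ℝ (Fin m))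
    (u₀ : EuclideanSpace ℝ (Fin n)) : ℕ → EuclideanSpace ℝ (Fin n)
  | 0 => u₀
  | k + 1 => irmglStep g σ A η₀ η₁ ν₀ ν₁ ν₂ w
      (irmglSeq g σ A η₀ η₁ ν₀ ν₁ ν₂ w u₀ k)

end

/-!
Expanding `‖u_{k+1} - z‖²` around a solution `z`, the choice of `α` and `β` bounds the graph
Laplacian step and the overshoot of the gradient step by multiples of the squared residual: the
distance to `z` decreases while the discrepancy exceeds `τ δ`, and with exact data
`∑ ‖A u_k - v‖² < ∞`. In finite dimensions the exact iterates then have a cluster point `û` with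
`A û = v`, and the same estimate around `û` (a quasi-Fejér inequality) makes the whole sequence
converge to `û`. For a fixed `k` the noisy iterates converge to the exact ones, by continuity.
If `k_j` takes a value `k` infinitely often, the exact residual at step `k` vanishes, so the
exact iteration has already stopped at `û`; if `k_j` is large, the noisy iterate at a fixed index
is near `û` and stays near it up to `k_j` by monotonicity.
-/

open Topology

section HilbertSpace

variable {E F : Type*} [NormedAddCommGroup E] [InnerProductSpace ℝ E] [CompleteSpace E]
  [NormedAddCommGroup F] [InnerProductSpace ℝ F] [CompleteSpace F]

theorem norm_sub_smul_adjoint_sub_smul_sub_sq_le (A : E →L[ℝ] F) {z u b : E} {v w : F}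
    {α β η η₀ η₁ ν₀ ν₁ δ : ℝ} (hz : A z = v) (hw : ‖w - v‖ ≤ δ)
    (hη : 0 ≤ η) (hηα : η ≤ α) (hαη₁ : α ≤ η₁)
    (hαη₀ : α * ‖adjoint A (A u - w)‖ ^ 2 ≤ η₀ * ‖A u - w‖ ^ 2)
    (hβ : 0 ≤ β) (hβν₀ : β * ‖b‖ ≤ ν₀ * ‖A u - w‖ ^ 2) (hβν₁ : β * ‖b‖ ≤ ν₁) :
    ‖u - α • adjoint A (A u - w) - β • b - z‖ ^ 2 ≤
      ‖u - z‖ ^ 2 - 2 * (η - ν₀ * ‖u - z‖ - η₀ * η₁ - ν₀ * ν₁) * ‖A u - w‖ ^ 2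
        + 2 * η₁ * δ * ‖A u - w‖ := by
  set r := A u - w
  set a := adjoint A r
  have hα : 0 ≤ α := hη.trans hηα
  have hδ : 0 ≤ δ := (norm_nonneg _).trans hw
  have expand : ‖u - α • a - β • b - z‖ ^ 2 =
      ‖u - z‖ ^ 2 - 2 * (α * ⟪u - z, a⟫ + β * ⟪u - z, b⟫) + ‖α • a + β • b‖ ^ 2 := by
    rw [show u - α • a - β • b - z = (u - z) - (α • a + β • b) by abel, norm_sub_sq_real,
      inner_add_right, real_inner_smul_right, real_inner_smul_right]
  -- `A (u - z) = r + (w - v)` splits the descent direction into residual and noise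
  have inner_a : ⟪u - z, a⟫ = ‖r‖ ^ 2 + ⟪r, w - v⟫ := by
    rw [adjoint_inner_right, show A (u - z) = r + (w - v) by simp only [r, map_sub, hz]; abel,
      inner_add_left, real_inner_self_eq_norm_sq, real_inner_comm]
  have noise : |⟪r, w - v⟫| ≤ ‖r‖ * δ :=
    (abs_real_inner_le_norm _ _).trans (mul_le_mul_of_nonneg_left hw (norm_nonneg _))
  have descent : η * ‖r‖ ^ 2 - η₁ * δ * ‖r‖ ≤ α * ⟪u - z, a⟫ := by
    rw [inner_a]
    nlinarith [neg_abs_le ⟪r, w - v⟫, mul_nonneg (hα.trans hαη₁) (mul_nonneg (norm_nonneg r) hδ),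
      mul_nonneg (sub_nonneg.2 hαη₁) (mul_nonneg (norm_nonneg r) hδ), sq_nonneg ‖r‖]
  have smoothing : -(ν₀ * ‖u - z‖ * ‖r‖ ^ 2) ≤ β * ⟪u - z, b⟫ := by
    nlinarith [neg_abs_le ⟪u - z, b⟫, abs_real_inner_le_norm (u - z) b,
      mul_le_mul_of_nonneg_right hβν₀ (norm_nonneg (u - z))]
  have step_sq : ‖α • a + β • b‖ ^ 2 ≤ 2 * (η₀ * η₁ + ν₀ * ν₁) * ‖r‖ ^ 2 := by
    have htri : ‖α • a + β • b‖ ≤ α * ‖a‖ + β * ‖b‖ := by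
      refine (norm_add_le _ _).trans_eq ?_
      rw [norm_smul, norm_smul, Real.norm_of_nonneg hα, Real.norm_of_nonneg hβ]
    have hβb : 0 ≤ β * ‖b‖ := mul_nonneg hβ (norm_nonneg b)
    nlinarith [pow_le_pow_left₀ (norm_nonneg _) htri 2, sq_nonneg (α * ‖a‖ - β * ‖b‖),
      mul_le_mul hαη₁ hαη₀ (by positivity) (hα.trans hαη₁),
      mul_le_mul hβν₁ hβν₀ hβb (hβb.trans hβν₁)]
  rw [expand]
  nlinarith

end HilbertSpace

theorem le_add_tsum_of_le_add {a e : ℕ → ℝ} (he : ∀ k, 0 ≤ e k) (hsum : Summable e)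
    (hrec : ∀ k, a (k + 1) ≤ a k + e k) {k l : ℕ} (hkl : k ≤ l) :
    a l ≤ a k + ∑' i, e (i + k) := by
  have hpartial : a l ≤ a k + ∑ i ∈ Finset.range (l - k), e (i + k) := by
    induction l, hkl using Nat.le_induction with
    | base => simp
    | succ l hkl ih =>
      rw [Nat.sub_add_comm hkl, Finset.sum_range_succ, Nat.sub_add_cancel hkl]
      linarith [hrec l]
  exact hpartial.trans (add_le_add_right
    (((summable_nat_add_iff k).2 hsum).sum_le_tsum _ fun i _ => he (i + k)) _)

theorem tendsto_zero_of_le_add_of_summable {a e : ℕ → ℝ} (ha : ∀ k, 0 ≤ a k)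
    (he : ∀ k, 0 ≤ e k) (hsum : Summable e) (hrec : ∀ k, a (k + 1) ≤ a k + e k)
    {φ : ℕ → ℕ} (hφ : StrictMono φ) (hsub : Tendsto (a ∘ φ) atTop (𝓝 0)) :
    Tendsto a atTop (𝓝 0) := by
  refine tendsto_order.2 ⟨fun ε hε => .of_forall fun k => hε.trans_le (ha k), fun ε hε => ?_⟩
  have htail : Tendsto (fun i => a (φ i) + ∑' j, e (j + φ i)) atTop (𝓝 0) := by
    simpa using hsub.add ((tendsto_sum_nat_add e).comp hφ.tendsto_atTop)
  obtain ⟨i, hi⟩ := (htail.eventually (gt_mem_nhds hε)).exists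
  filter_upwards [eventually_ge_atTop (φ i)] with l hl
  exact (le_add_tsum_of_le_add he hsum hrec hl).trans_lt hi

theorem Continuous.smul_of_abs_le_of_continuousAt {X E : Type*} [TopologicalSpace X]
    [NormedAddCommGroup E] [NormedSpace ℝ E] {c : X → ℝ} {f : X → E} {M : ℝ}
    (hf : Continuous f) (hc : ∀ x, |c x| ≤ M) (hcf : ∀ x, f x ≠ 0 → ContinuousAt c x) :
    Continuous fun x => c x • f x := by
  refine continuous_iff_continuousAt.2 fun x => ?_
  by_cases hx : f x = 0
  · have hbdd : IsBoundedUnder (· ≤ ·) (𝓝 x) (Norm.norm ∘ c) := isBoundedUnder_of ⟨M, hc⟩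
    simpa [ContinuousAt, hx] using hbdd.smul_tendsto_zero (hx ▸ hf.tendsto x)
  · exact (hcf x hx).smul hf.continuousAt

theorem tendsto_apply_stoppingIndex {E : Type*} [PseudoMetricSpace E] {x : ℕ → ℕ → E}
    {ubar : ℕ → E} {uhat : E} {kstop : ℕ → ℕ} {p : ℝ} (hp : 0 < p)
    (hstab : ∀ k, Tendsto (fun j => x j k) atTop (𝓝 (ubar k)))
    (hconv : Tendsto ubar atTop (𝓝 uhat))
    (hstop : ∀ k, ∀ᶠ j in atTop, kstop j = k → ubar k = uhat)
    (htraj : ∀ j K k ρ, ρ ≤ p → K ≤ k → k ≤ kstop j → dist (x j K) uhat ≤ ρ →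
      dist (x j k) uhat ≤ ρ) :
    Tendsto (fun j => x j (kstop j)) atTop (𝓝 uhat) := by
  refine Metric.tendsto_nhds.2 fun ε hε => ?_
  set ρ := min (ε / 2) p
  have hρ : 0 < ρ := lt_min (half_pos hε) hp
  obtain ⟨K, hK⟩ := (hconv.eventually (Metric.ball_mem_nhds uhat (half_pos hρ))).exists
  have hbefore : ∀ᶠ j in atTop, ∀ k ∈ Finset.range K,
      dist (x j k) (ubar k) < ε ∧ (kstop j = k → ubar k = uhat) :=
    (eventually_all_finset _).2 fun k _ => (Metric.tendsto_nhds.1 (hstab k) ε hε).and (hstop k)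
  filter_upwards [hbefore, Metric.tendsto_nhds.1 (hstab K) _ (half_pos hρ)] with j hj hjK
  rcases lt_or_ge (kstop j) K with hlt | hge
  · obtain ⟨hclose, hsame⟩ := hj (kstop j) (Finset.mem_range.2 hlt)
    rwa [← hsame rfl]
  · have hK' : dist (x j K) uhat ≤ ρ :=
      (dist_triangle _ (ubar K) _).trans (by linarith [Metric.mem_ball.1 hK])
    exact (htraj j K (kstop j) ρ (min_le_right _ _) hge le_rfl hK').trans_lt
      (by linarith [min_le_left (ε / 2) p])

section IRMGL

variable {n m : ℕ} {g : Fin n → Fin n → ℝ} {σ : ℝ}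
  {A : EuclideanSpace ℝ (Fin n) →L[ℝ] EuclideanSpace ℝ (Fin m)}
  {η₀ η₁ ν₀ ν₁ ν₂ η : ℝ} {v w : EuclideanSpace ℝ (Fin m)} {u z : EuclideanSpace ℝ (Fin n)}

theorem alphaStep_nonneg (hη₀ : 0 ≤ η₀) (hη₁ : 0 ≤ η₁) : 0 ≤ alphaStep A η₀ η₁ w u := by
  unfold alphaStep; split_ifs
  · exact le_min (by positivity) hη₁
  · exact hη₁

theorem alphaStep_le : alphaStep A η₀ η₁ w u ≤ η₁ := by
  unfold alphaStep; split_ifs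
  · exact min_le_right _ _
  · exact le_rfl

theorem le_alphaStep (hη : 0 ≤ η) (hηA : η * ‖A‖ ^ 2 ≤ η₀) (hηη₁ : η ≤ η₁) :
    η ≤ alphaStep A η₀ η₁ w u := by
  unfold alphaStep; split_ifs with h
  · refine le_min ?_ hηη₁
    rw [le_div_iff₀ (by positivity)]
    have hadj : ‖adjoint A (A u - w)‖ ≤ ‖A‖ * ‖A u - w‖ := by
      simpa using (adjoint A).le_opNorm (A u - w)
    calc η * ‖adjoint A (A u - w)‖ ^ 2 ≤ η * ‖A‖ ^ 2 * ‖A u - w‖ ^ 2 := by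
          rw [mul_assoc, ← mul_pow]; gcongr
      _ ≤ η₀ * ‖A u - w‖ ^ 2 := by gcongr
  · exact hηη₁

theorem alphaStep_mul_norm_sq_le (hη₀ : 0 ≤ η₀) :
    alphaStep A η₀ η₁ w u * ‖adjoint A (A u - w)‖ ^ 2 ≤ η₀ * ‖A u - w‖ ^ 2 := by
  unfold alphaStep; split_ifs with h
  · have ha : 0 < ‖adjoint A (A u - w)‖ ^ 2 := by positivity
    calc _ ≤ η₀ * ‖A u - w‖ ^ 2 / ‖adjoint A (A u - w)‖ ^ 2 * ‖adjoint A (A u - w)‖ ^ 2 := by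
          gcongr; exact min_le_left _ _
      _ = η₀ * ‖A u - w‖ ^ 2 := div_mul_cancel₀ _ ha.ne'
  · rw [not_not.1 h, norm_zero, zero_pow two_ne_zero, mul_zero]
    positivity

theorem betaStep_nonneg (hν₀ : 0 ≤ ν₀) (hν₁ : 0 ≤ ν₁) (hν₂ : 0 ≤ ν₂) :
    0 ≤ betaStep g σ A ν₀ ν₁ ν₂ w u := by
  unfold betaStep; split_ifs
  · exact le_min (le_min (by positivity) (by positivity)) hν₂
  · exact le_rfl

theorem betaStep_le (hν₂ : 0 ≤ ν₂) : betaStep g σ A ν₀ ν₁ ν₂ w u ≤ ν₂ := by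
  unfold betaStep; split_ifs
  · exact min_le_right _ _
  · exact hν₂

theorem betaStep_mul_norm_le_residual (hν₀ : 0 ≤ ν₀) :
    betaStep g σ A ν₀ ν₁ ν₂ w u * ‖lapCLM g σ u u‖ ≤ ν₀ * ‖A u - w‖ ^ 2 := by
  unfold betaStep; split_ifs with h
  · have hb : 0 < ‖lapCLM g σ u u‖ := norm_pos_iff.2 h
    calc _ ≤ ν₀ * ‖A u - w‖ ^ 2 / ‖lapCLM g σ u u‖ * ‖lapCLM g σ u u‖ := by
          gcongr; exact (min_le_left _ _).trans (min_le_left _ _)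
      _ = ν₀ * ‖A u - w‖ ^ 2 := div_mul_cancel₀ _ hb.ne'
  · rw [zero_mul]; positivity

theorem betaStep_mul_norm_le (hν₁ : 0 ≤ ν₁) :
    betaStep g σ A ν₀ ν₁ ν₂ w u * ‖lapCLM g σ u u‖ ≤ ν₁ := by
  unfold betaStep; split_ifs with h
  · have hb : 0 < ‖lapCLM g σ u u‖ := norm_pos_iff.2 h
    calc _ ≤ ν₁ / ‖lapCLM g σ u u‖ * ‖lapCLM g σ u u‖ := by
          gcongr; exact (min_le_left _ _).trans (min_le_right _ _)
      _ = ν₁ := div_mul_cancel₀ _ hb.ne'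
  · rwa [zero_mul]

theorem betaStep_of_apply_eq (hν₁ : 0 ≤ ν₁) (hν₂ : 0 ≤ ν₂) (hu : A u = w) :
    betaStep g σ A ν₀ ν₁ ν₂ w u = 0 := by
  unfold betaStep; split_ifs
  · simp [hu, hν₂, div_nonneg hν₁ (norm_nonneg _)]
  · rfl

theorem irmglStep_sub_sq_le (hη₀ : 0 ≤ η₀) (hν₀ : 0 ≤ ν₀) (hν₁ : 0 ≤ ν₁) (hν₂ : 0 ≤ ν₂)
    (hη : 0 ≤ η) (hηA : η * ‖A‖ ^ 2 ≤ η₀) (hηη₁ : η ≤ η₁) (hz : A z = v) {δ : ℝ}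
    (hw : ‖w - v‖ ≤ δ) :
    ‖irmglStep g σ A η₀ η₁ ν₀ ν₁ ν₂ w u - z‖ ^ 2 ≤
      ‖u - z‖ ^ 2 - 2 * (η - ν₀ * ‖u - z‖ - η₀ * η₁ - ν₀ * ν₁) * ‖A u - w‖ ^ 2
        + 2 * η₁ * δ * ‖A u - w‖ :=
  norm_sub_smul_adjoint_sub_smul_sub_sq_le A hz hw hη (le_alphaStep hη hηA hηη₁) alphaStep_le
    (alphaStep_mul_norm_sq_le hη₀) (betaStep_nonneg hν₀ hν₁ hν₂)
    (betaStep_mul_norm_le_residual hν₀) (betaStep_mul_norm_le hν₁)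

theorem irmglStep_sub_sq_le_of_norm_le (hη₀ : 0 ≤ η₀) (hν₀ : 0 ≤ ν₀) (hν₁ : 0 ≤ ν₁)
    (hν₂ : 0 ≤ ν₂) (hη : 0 ≤ η) (hηA : η * ‖A‖ ^ 2 ≤ η₀) (hηη₁ : η ≤ η₁) (hz : A z = v)
    {R : ℝ} (hu : ‖u - z‖ ≤ R) :
    ‖irmglStep g σ A η₀ η₁ ν₀ ν₁ ν₂ v u - z‖ ^ 2 ≤
      ‖u - z‖ ^ 2 - 2 * (η - ν₀ * (R + ν₁) - η₀ * η₁) * ‖A u - v‖ ^ 2 := by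
  have := irmglStep_sub_sq_le (g := g) (σ := σ) (ν₂ := ν₂) (u := u) hη₀ hν₀ hν₁ hν₂ hη hηA hηη₁
    hz (sub_self v ▸ norm_zero.le)
  nlinarith [mul_le_mul_of_nonneg_left hu hν₀, sq_nonneg ‖A u - v‖]

theorem norm_irmglStep_sub_le_of_discrepancy (hη₀ : 0 ≤ η₀) (hν₀ : 0 ≤ ν₀) (hν₁ : 0 ≤ ν₁)
    (hν₂ : 0 ≤ ν₂) (hη : 0 ≤ η) (hηA : η * ‖A‖ ^ 2 ≤ η₀) (hηη₁ : η ≤ η₁) (hz : A z = v)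
    {τ p δ : ℝ} (hτ : 0 < τ) (hC : 0 ≤ η - η₁ / τ - ν₀ * (p + ν₁) - η₀ * η₁)
    (hw : ‖w - v‖ ≤ δ) (hdisc : τ * δ ≤ ‖A u - w‖) (hu : ‖u - z‖ ≤ p) :
    ‖irmglStep g σ A η₀ η₁ ν₀ ν₁ ν₂ w u - z‖ ≤ ‖u - z‖ := by
  have hstep := irmglStep_sub_sq_le (g := g) (σ := σ) (ν₂ := ν₂) (u := u) hη₀ hν₀ hν₁ hν₂ hη
    hηA hηη₁ hz hw
  have hnoise : η₁ * δ * ‖A u - w‖ ≤ η₁ / τ * ‖A u - w‖ ^ 2 := by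
    rw [div_mul_eq_mul_div, le_div_iff₀ hτ]
    nlinarith [mul_le_mul_of_nonneg_left hdisc (mul_nonneg (hη.trans hηη₁) (norm_nonneg (A u - w)))]
  refine le_of_pow_le_pow_left₀ two_ne_zero (norm_nonneg _) ?_
  nlinarith [mul_le_mul_of_nonneg_left hu hν₀, sq_nonneg ‖A u - w‖,
    mul_nonneg hC (sq_nonneg ‖A u - w‖)]

theorem irmglSeq_sub_sq_add_sum_le (hη₀ : 0 ≤ η₀) (hν₀ : 0 ≤ ν₀) (hν₁ : 0 ≤ ν₁)
    (hν₂ : 0 ≤ ν₂) (hη : 0 ≤ η) (hηA : η * ‖A‖ ^ 2 ≤ η₀) (hηη₁ : η ≤ η₁) (hz : A z = v)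
    {p : ℝ} (hC₀ : 0 ≤ η - ν₀ * (p + ν₁) - η₀ * η₁) {u₀ : EuclideanSpace ℝ (Fin n)}
    (hu₀ : ‖u₀ - z‖ ≤ p) (k : ℕ) :
    ‖irmglSeq g σ A η₀ η₁ ν₀ ν₁ ν₂ v u₀ k - z‖ ^ 2
        + 2 * (η - ν₀ * (p + ν₁) - η₀ * η₁) *
          ∑ i ∈ Finset.range k, ‖A (irmglSeq g σ A η₀ η₁ ν₀ ν₁ ν₂ v u₀ i) - v‖ ^ 2
      ≤ p ^ 2 := by
  induction k with
  | zero =>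
    simpa only [irmglSeq, Finset.range_zero, Finset.sum_empty, mul_zero, add_zero]
      using pow_le_pow_left₀ (norm_nonneg _) hu₀ 2
  | succ k ih =>
    have hsum : 0 ≤ ∑ i ∈ Finset.range k, ‖A (irmglSeq g σ A η₀ η₁ ν₀ ν₁ ν₂ v u₀ i) - v‖ ^ 2 :=
      Finset.sum_nonneg fun i _ => sq_nonneg _
    have hk : ‖irmglSeq g σ A η₀ η₁ ν₀ ν₁ ν₂ v u₀ k - z‖ ≤ p :=
      le_of_pow_le_pow_left₀ two_ne_zero ((norm_nonneg _).trans hu₀)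
        (by nlinarith [mul_nonneg hC₀ hsum])
    have hstep : ‖irmglSeq g σ A η₀ η₁ ν₀ ν₁ ν₂ v u₀ (k + 1) - z‖ ^ 2 ≤
        ‖irmglSeq g σ A η₀ η₁ ν₀ ν₁ ν₂ v u₀ k - z‖ ^ 2
          - 2 * (η - ν₀ * (p + ν₁) - η₀ * η₁)
            * ‖A (irmglSeq g σ A η₀ η₁ ν₀ ν₁ ν₂ v u₀ k) - v‖ ^ 2 :=
      irmglStep_sub_sq_le_of_norm_le hη₀ hν₀ hν₁ hν₂ hη hηA hηη₁ hz hk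
    rw [Finset.sum_range_succ]
    linarith

theorem exists_tendsto_irmglSeq_of_exact (hη₀ : 0 ≤ η₀) (hν₀ : 0 ≤ ν₀) (hν₁ : 0 ≤ ν₁)
    (hν₂ : 0 ≤ ν₂) (hη : 0 ≤ η) (hηA : η * ‖A‖ ^ 2 ≤ η₀) (hηη₁ : η ≤ η₁) (hz : A z = v)
    {p : ℝ} (hC₀ : 0 < η - ν₀ * (p + ν₁) - η₀ * η₁) {u₀ : EuclideanSpace ℝ (Fin n)}
    (hu₀ : ‖u₀ - z‖ ≤ p) :
    ∃ uhat, A uhat = v ∧ Tendsto (irmglSeq g σ A η₀ η₁ ν₀ ν₁ ν₂ v u₀) atTop (𝓝 uhat) := by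
  set u := irmglSeq g σ A η₀ η₁ ν₀ ν₁ ν₂ v u₀
  set C₀ := η - ν₀ * (p + ν₁) - η₀ * η₁
  have henergy := irmglSeq_sub_sq_add_sum_le (g := g) (σ := σ) (ν₂ := ν₂) hη₀ hν₀ hν₁ hν₂ hη
    hηA hηη₁ hz hC₀.le hu₀
  have hsum : ∀ k, 0 ≤ ∑ i ∈ Finset.range k, ‖A (u i) - v‖ ^ 2 :=
    fun k => Finset.sum_nonneg fun i _ => sq_nonneg _
  have hball : ∀ k, ‖u k - z‖ ≤ p := fun k =>
    le_of_pow_le_pow_left₀ two_ne_zero ((norm_nonneg _).trans hu₀)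
      (by nlinarith [henergy k, mul_nonneg hC₀.le (hsum k)])
  have hres : Summable fun k => ‖A (u k) - v‖ ^ 2 :=
    summable_of_sum_range_le (c := p ^ 2 / (2 * C₀)) (fun _ => sq_nonneg _) fun k => by
      rw [le_div_iff₀ (by positivity)]; nlinarith [henergy k, sq_nonneg ‖u k - z‖]
  obtain ⟨uhat, huhat, φ, hφ, hlim⟩ := (isCompact_closedBall z p).tendsto_subseq (x := u)
    fun k => mem_closedBall_iff_norm.2 (hball k)
  have hsol : A uhat = v := by
    have hlim' : Tendsto (fun i => ‖A (u (φ i)) - v‖ ^ 2) atTop (𝓝 (‖A uhat - v‖ ^ 2)) :=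
      (((A.continuous.tendsto uhat).comp hlim).sub_const v).norm.pow 2
    have h0 := tendsto_nhds_unique hlim' (hres.tendsto_atTop_zero.comp hφ.tendsto_atTop)
    rwa [sq_eq_zero_iff, norm_eq_zero, sub_eq_zero] at h0
  refine ⟨uhat, hsol, tendsto_iff_norm_sub_tendsto_zero.2 ?_⟩
  -- the iterates stay within `2p` of `uhat`, so the step estimate around `uhat` is quasi-Fejér
  have hR : ∀ k, ‖u k - uhat‖ ≤ 2 * p := fun k => by
    have := norm_sub_le_norm_sub_add_norm_sub (u k) z uhat
    rw [norm_sub_rev z] at this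
    linarith [hball k, mem_closedBall_iff_norm.1 huhat]
  set M := 2 * (ν₀ * (2 * p + ν₁) + η₀ * η₁)
  have hM : 0 ≤ M := by
    have hp : 0 ≤ p := (norm_nonneg _).trans hu₀
    have hη₁ : 0 ≤ η₁ := hη.trans hηη₁
    positivity
  have hrec : ∀ k, ‖u (k + 1) - uhat‖ ^ 2 ≤ ‖u k - uhat‖ ^ 2 + M * ‖A (u k) - v‖ ^ 2 := by
    intro k
    have hstep : ‖u (k + 1) - uhat‖ ^ 2 ≤
        ‖u k - uhat‖ ^ 2 - 2 * (η - ν₀ * (2 * p + ν₁) - η₀ * η₁) * ‖A (u k) - v‖ ^ 2 :=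
      irmglStep_sub_sq_le_of_norm_le hη₀ hν₀ hν₁ hν₂ hη hηA hηη₁ hsol (hR k)
    nlinarith [mul_nonneg hη (sq_nonneg ‖A (u k) - v‖)]
  have hsq := tendsto_zero_of_le_add_of_summable (a := fun k => ‖u k - uhat‖ ^ 2)
    (fun k => sq_nonneg _) (fun k => mul_nonneg hM (sq_nonneg _)) (hres.mul_left M)
    hrec hφ (by simpa [Function.comp_def] using (tendsto_iff_norm_sub_tendsto_zero.1 hlim).pow 2)
  simpa [Function.comp_def] using (Real.continuous_sqrt.tendsto 0).comp hsq

theorem continuous_lapCLM_apply_self : Continuous fun u => lapCLM g σ u u := by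
  have hW : Continuous fun u : EuclideanSpace ℝ (Fin n) => wMat g σ u :=
    continuous_pi fun a => continuous_pi fun b => by simp only [wMat, Matrix.of_apply]; fun_prop
  have hL : Continuous fun u : EuclideanSpace ℝ (Fin n) => lapMat g σ u :=
    (Continuous.matrix_diagonal (continuous_pi fun a =>
      continuous_finsetSum _ fun b _ => hW.matrix_elem a b)).sub hW
  exact (PiLp.continuous_toLp 2 _).comp (hL.matrix_mulVec (PiLp.continuous_ofLp 2 _))

theorem continuous_irmglStep (hη₀ : 0 ≤ η₀) (hη₁ : 0 ≤ η₁) (hν₀ : 0 ≤ ν₀) (hν₁ : 0 ≤ ν₁)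
    (hν₂ : 0 ≤ ν₂) :
    Continuous fun x : EuclideanSpace ℝ (Fin m) × EuclideanSpace ℝ (Fin n) =>
      irmglStep g σ A η₀ η₁ ν₀ ν₁ ν₂ x.1 x.2 := by
  have hres : Continuous fun x : EuclideanSpace ℝ (Fin m) × EuclideanSpace ℝ (Fin n) =>
      A x.2 - x.1 := by fun_prop
  have hadj := (adjoint A).continuous.comp hres
  have hlap : Continuous fun x : EuclideanSpace ℝ (Fin m) × EuclideanSpace ℝ (Fin n) =>
      lapCLM g σ x.2 x.2 := continuous_lapCLM_apply_self.comp continuous_snd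
  -- each step length jumps only where its direction vanishes, and stays bounded
  have hα : Continuous fun x : EuclideanSpace ℝ (Fin m) × EuclideanSpace ℝ (Fin n) =>
      alphaStep A η₀ η₁ x.1 x.2 • adjoint A (A x.2 - x.1) := by
    refine hadj.smul_of_abs_le_of_continuousAt
      (fun x => (abs_of_nonneg (alphaStep_nonneg hη₀ hη₁)).trans_le alphaStep_le) fun x hx => ?_
    have hne : ‖adjoint A (A x.2 - x.1)‖ ^ 2 ≠ 0 := by simpa using hx
    refine ContinuousAt.congr ?_ ((hadj.continuousAt.eventually_ne hx).mono fun y hy =>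
      (if_pos hy).symm)
    exact ((continuousAt_const.mul (hres.norm.pow 2).continuousAt).div
      (hadj.norm.pow 2).continuousAt hne).min continuousAt_const
  have hβ : Continuous fun x : EuclideanSpace ℝ (Fin m) × EuclideanSpace ℝ (Fin n) =>
      betaStep g σ A ν₀ ν₁ ν₂ x.1 x.2 • lapCLM g σ x.2 x.2 := by
    refine hlap.smul_of_abs_le_of_continuousAt
      (fun x => (abs_of_nonneg (betaStep_nonneg hν₀ hν₁ hν₂)).trans_le (betaStep_le hν₂))
      fun x hx => ?_
    have hne : ‖lapCLM g σ x.2 x.2‖ ≠ 0 := by simpa using hx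
    refine ContinuousAt.congr ?_ ((hlap.continuousAt.eventually_ne hx).mono fun y hy =>
      (if_pos hy).symm)
    exact (((continuousAt_const.mul (hres.norm.pow 2).continuousAt).div
      hlap.norm.continuousAt hne).min (continuousAt_const.div hlap.norm.continuousAt hne)).min
      continuousAt_const
  exact (continuous_snd.sub hα).sub hβ

theorem continuous_irmglSeq (hη₀ : 0 ≤ η₀) (hη₁ : 0 ≤ η₁) (hν₀ : 0 ≤ ν₀) (hν₁ : 0 ≤ ν₁)
    (hν₂ : 0 ≤ ν₂) (k : ℕ) :
    Continuous fun x : EuclideanSpace ℝ (Fin m) × EuclideanSpace ℝ (Fin n) =>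
      irmglSeq g σ A η₀ η₁ ν₀ ν₁ ν₂ x.1 x.2 k := by
  induction k with
  | zero => exact continuous_snd
  | succ k ih =>
    exact (continuous_irmglStep hη₀ hη₁ hν₀ hν₁ hν₂).comp (continuous_fst.prodMk ih)

theorem irmglStep_eq_self (hν₁ : 0 ≤ ν₁) (hν₂ : 0 ≤ ν₂) (hu : A u = w) :
    irmglStep g σ A η₀ η₁ ν₀ ν₁ ν₂ w u = u := by
  simp [irmglStep, hu, betaStep_of_apply_eq hν₁ hν₂ hu]

theorem irmglSeq_eq_of_apply_eq (hν₁ : 0 ≤ ν₁) (hν₂ : 0 ≤ ν₂) {u₀ : EuclideanSpace ℝ (Fin n)}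
    {K : ℕ} (hK : A (irmglSeq g σ A η₀ η₁ ν₀ ν₁ ν₂ w u₀ K) = w) {k : ℕ} (hk : K ≤ k) :
    irmglSeq g σ A η₀ η₁ ν₀ ν₁ ν₂ w u₀ k = irmglSeq g σ A η₀ η₁ ν₀ ν₁ ν₂ w u₀ K := by
  induction k, hk using Nat.le_induction with
  | base => rfl
  | succ k _ ih =>
    change irmglStep g σ A η₀ η₁ ν₀ ν₁ ν₂ w (irmglSeq g σ A η₀ η₁ ν₀ ν₁ ν₂ w u₀ k) = _
    rw [ih, irmglStep_eq_self hν₁ hν₂ hK]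

theorem norm_irmglSeq_sub_le_of_discrepancy (hη₀ : 0 ≤ η₀) (hν₀ : 0 ≤ ν₀) (hν₁ : 0 ≤ ν₁)
    (hν₂ : 0 ≤ ν₂) (hη : 0 ≤ η) (hηA : η * ‖A‖ ^ 2 ≤ η₀) (hηη₁ : η ≤ η₁) (hz : A z = v)
    {τ p δ : ℝ} (hτ : 0 < τ) (hC : 0 ≤ η - η₁ / τ - ν₀ * (p + ν₁) - η₀ * η₁)
    (hw : ‖w - v‖ ≤ δ) {u₀ : EuclideanSpace ℝ (Fin n)} {kstop : ℕ}
    (hdisc : ∀ k < kstop, τ * δ < ‖A (irmglSeq g σ A η₀ η₁ ν₀ ν₁ ν₂ w u₀ k) - w‖)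
    {ρ : ℝ} (hρ : ρ ≤ p) {K : ℕ} (hK : ‖irmglSeq g σ A η₀ η₁ ν₀ ν₁ ν₂ w u₀ K - z‖ ≤ ρ)
    {k : ℕ} (hKk : K ≤ k) (hk : k ≤ kstop) :
    ‖irmglSeq g σ A η₀ η₁ ν₀ ν₁ ν₂ w u₀ k - z‖ ≤ ρ := by
  induction k, hKk using Nat.le_induction with
  | base => exact hK
  | succ k _ ih =>
    have hk' := ih (Nat.le_of_succ_le hk)
    exact (norm_irmglStep_sub_le_of_discrepancy hη₀ hν₀ hν₁ hν₂ hη hηA hηη₁ hz hτ hC hw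
      (hdisc k hk).le (hk'.trans hρ)).trans hk'

end IRMGL

theorem stmt12_general (n m : ℕ) (g : Fin n → Fin n → ℝ) (σ : ℝ)
    (A : EuclideanSpace ℝ (Fin n) →L[ℝ] EuclideanSpace ℝ (Fin m))
    (η₀ η₁ ν₀ ν₁ ν₂ τ p η : ℝ)
    (hη₀ : 0 < η₀) (hη₁ : 0 < η₁) (hν₀ : 0 < ν₀) (hν₁ : 0 < ν₁) (hν₂ : 0 < ν₂)
    (hτ : 1 < τ) (hp : 0 < p) (hηpos : 0 < η) (hηle : η ≤ min (η₀ / ‖A‖ ^ 2) η₁)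
    (udag : EuclideanSpace ℝ (Fin n)) (v : EuclideanSpace ℝ (Fin m)) (hsol : A udag = v)
    (C : ℝ) (hCdef : C = η - η₁ / τ - ν₀ * (p + ν₁) - η₀ * η₁) (hC : 0 < C)
    (C₀ : ℝ) (hC₀def : C₀ = η - ν₀ * (p + ν₁) - η₀ * η₁) (hC₀ : 0 < C₀)
    (δ : ℕ → ℝ) (hδ : Tendsto δ atTop (nhds 0))
    (vj : ℕ → EuclideanSpace ℝ (Fin m)) (hvj : ∀ j, ‖vj j - v‖ ≤ δ j)
    (u₀ : EuclideanSpace ℝ (Fin n)) (hu₀ : ‖u₀ - udag‖ ≤ p)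
    (u₀j : ℕ → EuclideanSpace ℝ (Fin n)) (hu₀j : Tendsto u₀j atTop (nhds u₀))
    (kj : ℕ → ℕ)
    (hkj : ∀ j, ‖A (irmglSeq g σ A η₀ η₁ ν₀ ν₁ ν₂ (vj j) (u₀j j) (kj j)) - vj j‖
        ≤ τ * δ j ∧
      ∀ k < kj j, τ * δ j < ‖A (irmglSeq g σ A η₀ η₁ ν₀ ν₁ ν₂ (vj j) (u₀j j) k) - vj j‖) :
    ∃ uhat : EuclideanSpace ℝ (Fin n), A uhat = v ∧
      Tendsto (fun j => irmglSeq g σ A η₀ η₁ ν₀ ν₁ ν₂ (vj j) (u₀j j) (kj j)) atTop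
        (nhds uhat) := by
  have hηη₁ : η ≤ η₁ := hηle.trans (min_le_right _ _)
  have hηA : η * ‖A‖ ^ 2 ≤ η₀ := by
    rcases (norm_nonneg A).eq_or_lt with hA | hA
    · simpa [← hA] using hη₀.le
    · exact (le_div_iff₀ (by positivity)).1 (hηle.trans (min_le_left _ _))
  have hv : Tendsto vj atTop (𝓝 v) :=
    tendsto_iff_norm_sub_tendsto_zero.2 (squeeze_zero (fun j => norm_nonneg _) hvj hδ)
  obtain ⟨uhat, huhat, hconv⟩ := exists_tendsto_irmglSeq_of_exact (g := g) (σ := σ) (ν₂ := ν₂)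
    hη₀.le hν₀.le hν₁.le hν₂.le hηpos.le hηA hηη₁ hsol (hC₀def ▸ hC₀) hu₀
  have hstab (k : ℕ) := ((continuous_irmglSeq (g := g) (σ := σ) (A := A) hη₀.le hη₁.le hν₀.le
    hν₁.le hν₂.le k).tendsto (v, u₀)).comp (hv.prodMk_nhds hu₀j)
  have hstop (k : ℕ) :
      ∀ᶠ j in atTop, kj j = k → irmglSeq g σ A η₀ η₁ ν₀ ν₁ ν₂ v u₀ k = uhat := by
    by_cases hk : A (irmglSeq g σ A η₀ η₁ ν₀ ν₁ ν₂ v u₀ k) = v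
    · exact .of_forall fun _ _ => tendsto_nhds_unique (tendsto_atTop_of_eventually_const
        fun l hl => irmglSeq_eq_of_apply_eq hν₁.le hν₂.le hk hl) hconv
    -- a nonzero limiting residual at step `k` eventually exceeds `τ δ j`, so the stop is not at `k`
    have hres := (((A.continuous.tendsto _).comp (hstab k)).sub hv).norm
    filter_upwards [(hδ.const_mul τ).eventually_lt hres
      (by simpa using sub_ne_zero.2 hk)] with j hj hkj_eq
    exact absurd (hkj_eq ▸ (hkj j).1) hj.not_ge
  refine ⟨uhat, huhat, tendsto_apply_stoppingIndex hp hstab hconv hstop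
    fun j K k ρ hρ hKk hk hK => ?_⟩
  rw [dist_eq_norm] at hK ⊢
  exact norm_irmglSeq_sub_le_of_discrepancy hη₀.le hν₀.le hν₁.le hν₂.le hηpos.le hηA hηη₁ huhat
    (by linarith) (hCdef ▸ hC.le) (hvj j) (hkj j).2 hρ hK hKk hk

/-- Regularization property of IRMGL under the discrepancy principle. -/
theorem stmt12 (n m : ℕ) (g : Fin n → Fin n → ℝ) (σ : ℝ) (hσ : 0 < σ)
    (hgsymm : ∀ a b, g a b = g b a) (hgnn : ∀ a b, 0 ≤ g a b) (hgdiag : ∀ a, g a a = 0)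
    (A : EuclideanSpace ℝ (Fin n) →L[ℝ] EuclideanSpace ℝ (Fin m))
    (η₀ η₁ ν₀ ν₁ ν₂ τ p η : ℝ)
    (hη₀ : 0 < η₀) (hη₁ : 0 < η₁) (hν₀ : 0 < ν₀) (hν₁ : 0 < ν₁) (hν₂ : 0 < ν₂)
    (hτ : 1 < τ) (hp : 0 < p) (hηpos : 0 < η) (hηle : η ≤ min (η₀ / ‖A‖ ^ 2) η₁)
    (udag : EuclideanSpace ℝ (Fin n)) (v : EuclideanSpace ℝ (Fin m)) (hsol : A udag = v)
    (C : ℝ) (hCdef : C = η - η₁ / τ - ν₀ * (p + ν₁) - η₀ * η₁) (hC : 0 < C)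
    (C₀ : ℝ) (hC₀def : C₀ = η - ν₀ * (p + ν₁) - η₀ * η₁) (hC₀ : 0 < C₀)
    (δ : ℕ → ℝ) (hδpos : ∀ j, 0 < δ j) (hδ : Tendsto δ atTop (nhds 0))
    (vj : ℕ → EuclideanSpace ℝ (Fin m)) (hvj : ∀ j, ‖vj j - v‖ ≤ δ j)
    (u₀ : EuclideanSpace ℝ (Fin n)) (hu₀ : ‖u₀ - udag‖ ≤ p)
    (u₀j : ℕ → EuclideanSpace ℝ (Fin n)) (hu₀j : Tendsto u₀j atTop (nhds u₀))
    (hu₀jball : ∀ j, ‖u₀j j - udag‖ ≤ p)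
    (kj : ℕ → ℕ)
    (hkj : ∀ j, ‖A (irmglSeq g σ A η₀ η₁ ν₀ ν₁ ν₂ (vj j) (u₀j j) (kj j)) - vj j‖
        ≤ τ * δ j ∧
      ∀ k < kj j, τ * δ j < ‖A (irmglSeq g σ A η₀ η₁ ν₀ ν₁ ν₂ (vj j) (u₀j j) k) - vj j‖) :
    ∃ uhat : EuclideanSpace ℝ (Fin n), A uhat = v ∧
      Tendsto (fun j => irmglSeq g σ A η₀ η₁ ν₀ ν₁ ν₂ (vj j) (u₀j j) (kj j)) atTop
        (nhds uhat) :=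
  stmt12_general n m g σ A η₀ η₁ ν₀ ν₁ ν₂ τ p η hη₀ hη₁ hν₀ hν₁ hν₂ hτ hp hηpos hηle udag v hsol C
    hCdef hC C₀ hC₀def hC₀ δ hδ vj hvj u₀ hu₀ u₀j hu₀j kj hkj
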